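/- arXiv:0803.2736 — 4 statements merged into one kernel-verified Lean document; each statement's English description precedes it below -/
import Mathlib

section
/- For every positive integer n and every real x, the derivative of F(x) = e^{x^n} · Σ_{r=0}^∞ (−1)^r n^r x^{1+nr} / ∏_{p=0}^r (1+pn) equals e^{x^n}. (That is, this series multiplied by e^{x^n} is an antiderivative of e^{x^n}.) -/
/-!
Write `S(y) = ∑ term n r y`. Differentiating term by term (legitimate on every ball, where the
derivatives are dominated by the exponential series `∑ (n R^n)^r / r!`) and shifting the index
gives the linear ODE `S' = 1 - n y^(n-1) S`, because the derivative of the `(r+1)`-st term is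
`-n y^(n-1)` times the `r`-th one. Hence `(e^(y^n) S)' = e^(y^n) (n y^(n-1) S + S') = e^(y^n)`.
-/

open Finset Metric

noncomputable section

namespace ExpPowPrimitive

def term (n r : ℕ) (y : ℝ) : ℝ :=
  ((-1 : ℝ) ^ r * (n : ℝ) ^ r * y ^ (1 + n * r)) / ∏ p ∈ range (r + 1), (1 + (p : ℝ) * n)

/-- The factor `1 + n r` from differentiating `y ^ (1 + n r)` cancels the last factor of the
product in `term n r`. -/
def termDeriv (n r : ℕ) (y : ℝ) : ℝ :=
  ((-1 : ℝ) ^ r * (n : ℝ) ^ r * y ^ (n * r)) / ∏ p ∈ range r, (1 + (p : ℝ) * n)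

lemma hasDerivAt_term (n r : ℕ) (y : ℝ) : HasDerivAt (term n r) (termDeriv n r y) y := by
  have h := ((hasDerivAt_pow (1 + n * r) y).const_mul ((-1 : ℝ) ^ r * (n : ℝ) ^ r)).div_const
    (∏ p ∈ range (r + 1), (1 + (p : ℝ) * n))
  refine h.congr_deriv ?_
  have hlast : (1 + (r : ℝ) * n) ≠ 0 := by positivity
  have hprod : ∏ p ∈ range r, (1 + (p : ℝ) * n) ≠ 0 := prod_ne_zero_iff.2 fun p _ ↦ by positivity
  rw [termDeriv, prod_range_succ, Nat.add_sub_cancel_left]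
  generalize ∏ p ∈ range r, (1 + (p : ℝ) * n) = Q at hprod ⊢
  field_simp
  push_cast
  ring

lemma termDeriv_zero (n : ℕ) (y : ℝ) : termDeriv n 0 y = 1 := by
  simp [termDeriv]

lemma termDeriv_succ (n r : ℕ) (y : ℝ) :
    termDeriv n (r + 1) y = -((n : ℝ) * y ^ (n - 1)) * term n r y := by
  rcases Nat.eq_zero_or_pos n with rfl | hn
  · simp [termDeriv, term]
  have hpow : y ^ (n * (r + 1)) = y ^ (n - 1) * y ^ (1 + n * r) := by
    rw [← pow_add]; congr 1
    rw [Nat.mul_succ]; omega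
  rw [termDeriv, term, hpow]
  ring

lemma term_zero_right (n r : ℕ) : term n r 0 = 0 := by
  simp [term]

lemma pow_div_prod_le_pow_div_factorial (n r : ℕ) :
    (n : ℝ) ^ r / ∏ p ∈ range r, (1 + (p : ℝ) * n) ≤ (n : ℝ) ^ r / r.factorial := by
  rw [← prod_range_add_one_eq_factorial, pow_eq_prod_const, Nat.cast_prod,
    ← prod_div_distrib, ← prod_div_distrib]
  refine prod_le_prod (fun p _ ↦ by positivity) fun p _ ↦ ?_
  rw [div_le_div_iff₀ (by positivity) (by positivity)]
  have h : n * (p + 1) ≤ n * (1 + p * n) := by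
    rcases Nat.eq_zero_or_pos n with rfl | hn
    · simp
    · exact Nat.mul_le_mul_left n (by nlinarith)
  exact_mod_cast h

lemma norm_termDeriv_le (n r : ℕ) {R y : ℝ} (hy : |y| ≤ R) :
    ‖termDeriv n r y‖ ≤ ((n : ℝ) * R ^ n) ^ r / r.factorial := by
  have hprod : 0 < ∏ p ∈ range r, (1 + (p : ℝ) * n) := prod_pos fun p _ ↦ by positivity
  have hnorm : ‖termDeriv n r y‖ = (n : ℝ) ^ r / (∏ p ∈ range r, (1 + (p : ℝ) * n)) *
      |y| ^ (n * r) := by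
    simp only [termDeriv, Real.norm_eq_abs, abs_div, abs_mul, abs_pow, abs_neg, abs_one,
      one_pow, one_mul, Nat.abs_cast, abs_of_pos hprod]
    ring
  calc ‖termDeriv n r y‖
      ≤ (n : ℝ) ^ r / r.factorial * (R ^ n) ^ r := by
        rw [hnorm, ← pow_mul]
        exact mul_le_mul (pow_div_prod_le_pow_div_factorial n r)
          (pow_le_pow_left₀ (abs_nonneg y) hy _) (by positivity) (by positivity)
    _ = ((n : ℝ) * R ^ n) ^ r / r.factorial := by ring

lemma hasDerivAt_tsum_term (n : ℕ) (x : ℝ) :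
    HasDerivAt (fun y ↦ ∑' r, term n r y)
      (1 - (n : ℝ) * x ^ (n - 1) * ∑' r, term n r x) x := by
  set R := |x| + 1
  have hx : x ∈ ball (0 : ℝ) R := by simp [R]
  have h0 : (0 : ℝ) ∈ ball (0 : ℝ) R := mem_ball_self (by positivity)
  have hu : Summable fun r : ℕ ↦ ((n : ℝ) * R ^ n) ^ r / r.factorial :=
    Real.summable_pow_div_factorial _
  have hbound : ∀ r, ∀ y ∈ ball (0 : ℝ) R,
      ‖termDeriv n r y‖ ≤ ((n : ℝ) * R ^ n) ^ r / r.factorial := fun r y hy ↦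
    norm_termDeriv_le n r (by simpa [Real.dist_eq] using (mem_ball.1 hy).le)
  have hderiv : ∀ r, ∀ y ∈ ball (0 : ℝ) R, HasDerivAt (term n r) (termDeriv n r y) y :=
    fun r y _ ↦ hasDerivAt_term n r y
  have hsum0 : Summable fun r ↦ term n r 0 := by simp [term_zero_right]
  have hS := hasDerivAt_tsum_of_isPreconnected hu isOpen_ball
    (convex_ball (0 : ℝ) R).isPreconnected hderiv hbound h0 hsum0 hx
  have hsum : Summable fun r ↦ term n r x :=
    summable_of_summable_hasDerivAt_of_isPreconnected hu isOpen_ball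
      (convex_ball (0 : ℝ) R).isPreconnected hderiv hbound h0 hsum0 hx
  have hsum' : Summable fun r ↦ termDeriv n r x := .of_norm_bounded hu fun r ↦ hbound r x hx
  refine hS.congr_deriv ?_
  rw [hsum'.tsum_eq_zero_add, termDeriv_zero]
  simp only [termDeriv_succ, tsum_mul_left]
  ring

end ExpPowPrimitive

open ExpPowPrimitive in
theorem stmt_0_general (n : ℕ) (x : ℝ) :
    HasDerivAt (fun y : ℝ => Real.exp (y ^ n) *
      ∑' r : ℕ, ((-1 : ℝ) ^ r * (n : ℝ) ^ r * y ^ (1 + n * r)) /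
        ∏ p ∈ Finset.range (r + 1), (1 + (p : ℝ) * n))
      (Real.exp (x ^ n)) x := by
  have h := ((hasDerivAt_pow n x).exp).mul (hasDerivAt_tsum_term n x)
  exact h.congr_deriv (by ring)

theorem stmt_0 (n : ℕ) (hn : 0 < n) (x : ℝ) :
    HasDerivAt (fun y : ℝ => Real.exp (y ^ n) *
      ∑' r : ℕ, ((-1 : ℝ) ^ r * (n : ℝ) ^ r * y ^ (1 + n * r)) /
        ∏ p ∈ Finset.range (r + 1), (1 + (p : ℝ) * n))
      (Real.exp (x ^ n)) x :=
  stmt_0_general n x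
end
end

section
/- For every positive integer n and every real x, the derivative of G(x) = e^{−x^n} · Σ_{r=0}^∞ n^r x^{1+nr} / ∏_{p=0}^r (1+pn) equals e^{−x^n}. -/
/-!
Write `G = e^{-y^n} S` with `S y = ∑ aᵣ y^{1+nr}` and `aᵣ = nʳ / ∏_{p ≤ r} (1 + pn)`.
Since `aᵣ₊₁ (1 + (r+1)n) = n aᵣ`, termwise differentiation gives the linear equation
`S' = 1 + n y^{n-1} S`, and `e^{-y^n}` is exactly its integrating factor. Termwise
differentiation is justified on every ball `|y| < R` because `∏_{p ≤ r} (1 + pn) ≥ nʳ r!`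
bounds the differentiated terms by `((1+n) Rⁿ)ʳ / r!`.
-/

open Real Finset

theorem hasDerivAt_exp_neg_mul_of_hasDerivAt_one_add {φ S : ℝ → ℝ} {φ' x : ℝ}
    (hφ : HasDerivAt φ φ' x) (hS : HasDerivAt S (1 + φ' * S x) x) :
    HasDerivAt (fun y => exp (-φ y) * S y) (exp (-φ x)) x :=
  (hφ.neg.exp.mul hS).congr_deriv (by rw [Pi.neg_apply]; ring)

namespace ExpNegPowSeries

variable (n : ℕ)

noncomputable def denom (r : ℕ) : ℝ := ∏ p ∈ range (r + 1), (1 + (p : ℝ) * n)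

noncomputable def term (r : ℕ) (y : ℝ) : ℝ := (n : ℝ) ^ r * y ^ (1 + n * r) / denom n r

noncomputable def derivTerm (r : ℕ) (y : ℝ) : ℝ :=
  (n : ℝ) ^ r * ((1 + n * r : ℕ) : ℝ) * y ^ (n * r) / denom n r

theorem denom_pos (r : ℕ) : 0 < denom n r :=
  prod_pos fun _ _ => by positivity

theorem denom_succ (r : ℕ) : denom n (r + 1) = denom n r * (1 + ((r + 1 : ℕ) : ℝ) * n) :=
  prod_range_succ _ _

theorem pow_mul_factorial_le_denom (r : ℕ) : (n : ℝ) ^ r * r.factorial ≤ denom n r := by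
  induction r with
  | zero => simp [denom]
  | succ r ih =>
    rw [denom_succ, pow_succ, Nat.factorial_succ, Nat.cast_mul]
    calc (n : ℝ) ^ r * n * (((r + 1 : ℕ) : ℝ) * r.factorial)
        = (n : ℝ) ^ r * r.factorial * (((r + 1 : ℕ) : ℝ) * n) := by ring
      _ ≤ denom n r * (1 + ((r + 1 : ℕ) : ℝ) * n) := by
        gcongr
        · exact (denom_pos n r).le
        · linarith

theorem hasDerivAt_term (r : ℕ) (y : ℝ) : HasDerivAt (term n r) (derivTerm n r y) y := by
  refine (((hasDerivAt_pow (1 + n * r) y).const_mul ((n : ℝ) ^ r)).div_const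
    (denom n r)).congr_deriv ?_
  rw [derivTerm, Nat.add_sub_cancel_left]
  ring

theorem norm_derivTerm_le {R y : ℝ} (hy : |y| ≤ R) (r : ℕ) :
    ‖derivTerm n r y‖ ≤ ((1 + n) * R ^ n) ^ r / r.factorial := by
  have hcoeff : (n : ℝ) ^ r / denom n r ≤ 1 / r.factorial := by
    rw [div_le_div_iff₀ (denom_pos n r) (by positivity), one_mul]
    exact pow_mul_factorial_le_denom n r
  have hlin : ((1 + n * r : ℕ) : ℝ) ≤ (1 + n) ^ r := by
    have := one_add_mul_le_pow (a := (n : ℝ)) (by linarith [(n.cast_nonneg : (0 : ℝ) ≤ n)]) r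
    push_cast
    linarith
  have hpow : |y| ^ (n * r) ≤ (R ^ n) ^ r := by
    rw [← pow_mul]
    gcongr
  calc ‖derivTerm n r y‖
      = (n : ℝ) ^ r / denom n r * ((1 + n * r : ℕ) : ℝ) * |y| ^ (n * r) := by
        rw [derivTerm, Real.norm_eq_abs, abs_div, abs_mul, abs_mul, abs_pow, abs_pow,
          abs_of_pos (denom_pos n r), Nat.abs_cast, Nat.abs_cast]
        ring
    _ ≤ 1 / r.factorial * (1 + n) ^ r * (R ^ n) ^ r := by gcongr
    _ = ((1 + n) * R ^ n) ^ r / r.factorial := by rw [mul_pow]; ring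

theorem derivTerm_zero (y : ℝ) : derivTerm n 0 y = 1 := by
  simp [derivTerm, denom]

-- Holds also at `n = 0`, where the truncated `n - 1` is harmless because both sides vanish.
theorem mul_pow_pred_mul_pow_one_add (y : ℝ) (r : ℕ) :
    (n : ℝ) * y ^ (n - 1) * y ^ (1 + n * r) = n * y ^ (n * (r + 1)) := by
  cases n with
  | zero => simp
  | succ m =>
    rw [mul_assoc, ← pow_add]
    congr 2
    simp only [Nat.add_sub_cancel]
    ring

theorem derivTerm_succ (y : ℝ) (r : ℕ) :
    derivTerm n (r + 1) y = n * y ^ (n - 1) * term n r y := by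
  have hne : (1 : ℝ) + ((r + 1 : ℕ) : ℝ) * n ≠ 0 := by positivity
  have hne' := (denom_pos n r).ne'
  rw [derivTerm, term, denom_succ, mul_div_assoc', mul_left_comm, mul_assoc,
    mul_pow_pred_mul_pow_one_add]
  field_simp
  push_cast
  ring

theorem hasDerivAt_tsum_term (x : ℝ) :
    HasDerivAt (fun y => ∑' r, term n r y) (1 + n * x ^ (n - 1) * ∑' r, term n r x) x := by
  set R := |x| + 1
  have hbound : ∀ r y, y ∈ Metric.ball (0 : ℝ) R →
      ‖derivTerm n r y‖ ≤ ((1 + n) * R ^ n) ^ r / r.factorial := fun r y hy =>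
    norm_derivTerm_le n (by simpa using (Metric.mem_ball.1 hy).le) r
  have hx : x ∈ Metric.ball (0 : ℝ) R := by simp [R]
  have hsum : Summable fun r => derivTerm n r x :=
    .of_norm_bounded (Real.summable_pow_div_factorial _) fun r => hbound r x hx
  have hsum0 : Summable fun r => term n r 0 := by simp [term]
  refine (hasDerivAt_tsum_of_isPreconnected (Real.summable_pow_div_factorial _)
    Metric.isOpen_ball (convex_ball 0 R).isPreconnected (fun r y _ => hasDerivAt_term n r y)
    hbound (Metric.mem_ball_self (by positivity)) hsum0 hx).congr_deriv ?_
  rw [hsum.tsum_eq_zero_add, derivTerm_zero]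
  simp only [derivTerm_succ, tsum_mul_left]

end ExpNegPowSeries

theorem stmt_1_general (n : ℕ) (x : ℝ) :
    HasDerivAt (fun y : ℝ => Real.exp (-(y ^ n)) *
      ∑' r : ℕ, ((n : ℝ) ^ r * y ^ (1 + n * r)) /
        ∏ p ∈ Finset.range (r + 1), (1 + (p : ℝ) * n))
      (Real.exp (-(x ^ n))) x :=
  hasDerivAt_exp_neg_mul_of_hasDerivAt_one_add (hasDerivAt_pow n x)
    (ExpNegPowSeries.hasDerivAt_tsum_term n x)

theorem stmt_1 (n : ℕ) (hn : 0 < n) (x : ℝ) :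
    HasDerivAt (fun y : ℝ => Real.exp (-(y ^ n)) *
      ∑' r : ℕ, ((n : ℝ) ^ r * y ^ (1 + n * r)) /
        ∏ p ∈ Finset.range (r + 1), (1 + (p : ℝ) * n))
      (Real.exp (-(x ^ n))) x :=
  stmt_1_general n x
end

section
/- For every positive integer n and every nonnegative integer m, the identity 1/(m!·(n·m+1)) = (−1)^m · Σ_{r=0}^m (−1)^r n^{m−r} / ( r! · ∏_{p=0}^{m−r} (1+pn) ) holds. -/
/-!
The iterated forward differences of `x ↦ x⁻¹` with step `d` are
`Δ^k (x⁻¹) y = (-1)^k k! d^k / ∏_{p ≤ k} (y + p d)`, as one checks by induction on `k`.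
The Gregory–Newton formula `(y + m d)⁻¹ = ∑_k C(m, k) Δ^k (x⁻¹) y` at `y = 1`, `d = n` is the
identity, after dividing by `m!` and reversing the summation (`r = m - k`).
-/

open Finset
open scoped fwdDiff

-- `Δ_[d] ^[k]` needs the space: with all of Mathlib imported, `]^` lexes as a single token.
theorem fwdDiff_iter_inv_apply {K : Type*} [Field K] (d : K) (k : ℕ) {y : K}
    (hy : ∀ p : ℕ, y + p * d ≠ 0) :
    Δ_[d] ^[k] (fun x : K ↦ x⁻¹) y =
      (-1) ^ k * k.factorial * d ^ k / ∏ p ∈ range (k + 1), (y + p * d) := by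
  induction k generalizing y with
  | zero => simp
  | succ k ih =>
    have hy' : ∀ p : ℕ, y + d + p * d ≠ 0 := fun p ↦ by
      convert hy (p + 1) using 1; push_cast; ring
    have h0 : y ≠ 0 := by simpa using hy 0
    have hP : ∏ p ∈ range (k + 1), (y + p * d) ≠ 0 := prod_ne_zero_iff.2 fun p _ ↦ hy p
    have hP' : ∏ p ∈ range (k + 1), (y + d + p * d) ≠ 0 :=
      prod_ne_zero_iff.2 fun p _ ↦ hy' p
    have hprod : ∏ p ∈ range (k + 2), (y + p * d) =
        y * ∏ p ∈ range (k + 1), (y + d + p * d) := by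
      rw [prod_range_succ', mul_comm]
      push_cast
      simp only [zero_mul, add_zero]
      exact congrArg _ (prod_congr rfl fun p _ ↦ by ring)
    have hrec : y * ∏ p ∈ range (k + 1), (y + d + p * d) =
        (∏ p ∈ range (k + 1), (y + p * d)) * (y + (k + 1) * d) := by
      rw [← hprod, prod_range_succ]; push_cast; ring
    rw [Function.iterate_succ_apply', fwdDiff, ih hy', ih hy, Nat.factorial_succ, hprod,
      div_sub_div _ _ hP' hP, div_eq_div_iff (mul_ne_zero hP' hP) (mul_ne_zero h0 hP')]
    push_cast
    linear_combination
      -((-1) ^ k * (k.factorial : K) * d ^ k * ∏ p ∈ range (k + 1), (y + d + p * d)) * hrec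

theorem inv_add_mul_eq_sum_choose {K : Type*} [Field K] (d : K) {y : K}
    (hy : ∀ p : ℕ, y + p * d ≠ 0) (m : ℕ) :
    (y + m * d)⁻¹ = ∑ k ∈ range (m + 1),
      m.choose k * ((-1) ^ k * k.factorial * d ^ k / ∏ p ∈ range (k + 1), (y + p * d)) := by
  simpa only [nsmul_eq_mul, fwdDiff_iter_inv_apply d _ hy] using
    shift_eq_sum_fwdDiff_iter d (fun x : K ↦ x⁻¹) m y

theorem stmt_3_general (n : ℕ) (m : ℕ) :
    (1 : ℝ) / ((m.factorial : ℝ) * ((n : ℝ) * m + 1)) =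
      (-1 : ℝ) ^ m * ∑ r ∈ Finset.range (m + 1),
        ((-1 : ℝ) ^ r * (n : ℝ) ^ (m - r)) /
          ((r.factorial : ℝ) * ∏ p ∈ Finset.range (m - r + 1), (1 + (p : ℝ) * n)) := by
  have hpos : ∀ p : ℕ, (1 : ℝ) + p * n ≠ 0 := fun p ↦ by positivity
  rw [← sum_range_reflect, mul_sum, one_div, mul_inv, mul_comm (n : ℝ),
    add_comm _ (1 : ℝ), inv_add_mul_eq_sum_choose _ hpos, mul_sum]
  refine sum_congr rfl fun k hk ↦ ?_
  have hkm : k ≤ m := Nat.lt_succ_iff.mp (mem_range.mp hk)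
  rw [Nat.add_sub_cancel, Nat.sub_sub_self hkm, Nat.cast_choose ℝ hkm]
  have hsign : (-1 : ℝ) ^ m * (-1) ^ (m - k) = (-1) ^ k := by
    obtain ⟨j, rfl⟩ := Nat.exists_eq_add_of_le hkm
    rw [Nat.add_sub_cancel_left, pow_add, mul_assoc, ← mul_pow]
    norm_num
  have hP : ∏ p ∈ range (k + 1), (1 + (p : ℝ) * n) ≠ 0 := prod_ne_zero_iff.2 fun p _ ↦ hpos p
  generalize ∏ p ∈ range (k + 1), (1 + (p : ℝ) * n) = P at hP ⊢
  rw [← hsign]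
  field_simp

theorem stmt_3 (n : ℕ) (hn : 0 < n) (m : ℕ) :
    (1 : ℝ) / ((m.factorial : ℝ) * ((n : ℝ) * m + 1)) =
      (-1 : ℝ) ^ m * ∑ r ∈ Finset.range (m + 1),
        ((-1 : ℝ) ^ r * (n : ℝ) ^ (m - r)) /
          ((r.factorial : ℝ) * ∏ p ∈ Finset.range (m - r + 1), (1 + (p : ℝ) * n)) :=
  stmt_3_general n m
end

section
/- For the generalized normal distribution with even order parameter n, m_{kn} = (σ^n)^k · ∏_{r=0}^{k−1} (1 + rn) for every positive integer k, where m_{2q} = (n^{1/n}σ)^{2q} Γ((2q+1)/n)/Γ(1/n). -/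
/-! The functional equation gives `Γ(k + 1/n) = Γ(1/n) ∏_{r<k} (1/n + r)`, and the prefactor
`(n^{1/n})^{kn} = n^k` turns each factor `1/n + r` into `1 + r n`. -/

open Finset

theorem Real.Gamma_nat_add_eq_prod_mul (x : ℝ) (hx : ∀ m : ℕ, x ≠ -m) (k : ℕ) :
    Real.Gamma (k + x) = (∏ r ∈ range k, (x + r)) * Real.Gamma x := by
  induction k with
  | zero => simp
  | succ m ih =>
    have hxm : x + m ≠ 0 := fun h => hx m (eq_neg_of_add_eq_zero_left h)
    rw [Nat.cast_succ, add_right_comm, add_comm (m : ℝ) x, Real.Gamma_add_one hxm,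
      add_comm x m, ih, prod_range_succ]
    ring

theorem stmt_16_general (n : ℕ) (hn : 0 < n) (j : ℕ) (hj : n = 2 * j)
    (σ : ℝ) (k : ℕ)
    (M : ℕ → ℝ)
    (hM : M = fun q : ℕ => ((n : ℝ) ^ ((1 : ℝ) / n) * σ) ^ (2 * q) *
      Real.Gamma ((2 * q + 1) / n) / Real.Gamma (1 / n)) :
    M (k * j) = (σ ^ n) ^ k * ∏ r ∈ Finset.range k, (1 + (r : ℝ) * n) := by
  subst hM
  have hn0 : (n : ℝ) ≠ 0 := by positivity
  have hinv : (0 : ℝ) < 1 / n := by positivity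
  have hexp : 2 * (k * j) = n * k := by rw [hj]; ring
  have harg : (2 * ((k * j : ℕ) : ℝ) + 1) / n = k + 1 / n := by
    have hnum : 2 * ((k * j : ℕ) : ℝ) = k * n := by rw [hj]; push_cast; ring
    rw [hnum, add_div, mul_div_cancel_right₀ _ hn0]
  have hprod : (n : ℝ) ^ k * ∏ r ∈ range k, (1 / n + (r : ℝ)) =
      ∏ r ∈ range k, (1 + (r : ℝ) * n) := by
    rw [pow_eq_prod_const, ← prod_mul_distrib]
    exact prod_congr rfl fun r _ => by field_simp
  have hΓ : Real.Gamma (1 / n) ≠ 0 := (Real.Gamma_pos_of_pos hinv).ne'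
  have hx : ∀ m : ℕ, (1 / n : ℝ) ≠ -m := fun m =>
    ((neg_nonpos.2 m.cast_nonneg).trans_lt hinv).ne'
  simp only
  rw [hexp, harg, Real.Gamma_nat_add_eq_prod_mul _ hx, mul_pow, pow_mul, pow_mul, one_div,
    Real.rpow_inv_natCast_pow n.cast_nonneg hn.ne', ← one_div,
    mul_div_assoc, mul_div_cancel_right₀ _ hΓ, ← hprod]
  ring

theorem stmt_16 (n : ℕ) (hn : 0 < n) (j : ℕ) (hj : n = 2 * j)
    (σ : ℝ) (hσ : 0 < σ) (k : ℕ) (hk : 0 < k)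
    (M : ℕ → ℝ)
    (hM : M = fun q : ℕ => ((n : ℝ) ^ ((1 : ℝ) / n) * σ) ^ (2 * q) *
      Real.Gamma ((2 * q + 1) / n) / Real.Gamma (1 / n)) :
    M (k * j) = (σ ^ n) ^ k * ∏ r ∈ Finset.range k, (1 + (r : ℝ) * n) :=
  stmt_16_general n hn j hj σ k M hM
end
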